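/- For all distinct positive real numbers a and b, L(A(a,b)², G(a,b)²) = ((A(a,b)+G(a,b))/2)·L(A(a,b), G(a,b)) > ((A(a,b)+G(a,b))/2)·L(a,b) > L(a,b)². -/

import Mathlib

noncomputable def A (a b : ℝ) : ℝ := (a + b) / 2
noncomputable def G (a b : ℝ) : ℝ := Real.sqrt (a * b)
noncomputable def L (a b : ℝ) : ℝ := (a - b) / (Real.log a - Real.log b)

/-!
Write `a = x²`, `b = y²` and `u = (x - y) / (x + y) ∈ (-1, 1)`. Since `log x - log y = 2 artanh u`,
`L(x, y) = A(x, y) / φ(u)` with `φ(u) = artanh u / u = ∑ u^(2k) / (2k + 1)`. Together with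
`L(p², q²) = A(p, q) L(p, q)` this gives `L(a, b) = A(x, y)² / φ(u)`, while
`(A(a, b) + G(a, b)) / 2 = A(x, y)²` and `(A(a, b) - G(a, b)) / (A(a, b) + G(a, b)) = u²` give
`L(A(a, b), G(a, b)) = A(x, y)² / φ(u²)`. The two inequalities are then `φ(u²) < φ(u)` and
`1 < φ(u)`, which can be read off the power series of `φ` because `0 < u² < |u| < 1`.
-/

open Real

namespace Real

theorem hasSum_artanh {u : ℝ} (hu : |u| < 1) :
    HasSum (fun k : ℕ => u ^ (2 * k + 1) / (2 * k + 1)) (artanh u) := by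
  obtain ⟨hu₁, hu₂⟩ := abs_lt.1 hu
  rw [artanh_eq_half_log ⟨hu₁.le, hu₂.le⟩, log_div (by linarith) (by linarith)]
  exact ((hasSum_log_sub_log_of_abs_lt_one hu).mul_left (1 / 2)).congr_fun fun k => by ring

theorem hasSum_artanh_div_self {u : ℝ} (hu₀ : u ≠ 0) (hu : |u| < 1) :
    HasSum (fun k : ℕ => u ^ (2 * k) / (2 * k + 1)) (artanh u / u) := by
  refine ((hasSum_artanh hu).div_const u).congr_fun fun k => ?_
  field_simp
  ring

theorem one_lt_artanh_div_self {u : ℝ} (hu₀ : u ≠ 0) (hu : |u| < 1) : 1 < artanh u / u := by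
  refine hasSum_lt (i := 1) (fun k => ?_) ?_ (hasSum_pi_single 0 1) (hasSum_artanh_div_self hu₀ hu)
  · rcases eq_or_ne k 0 with rfl | hk
    · simp
    · rw [Pi.single_eq_of_ne hk]
      exact div_nonneg ((even_two_mul k).pow_nonneg u) (by positivity)
  · norm_num
    exact pow_two_pos_of_ne_zero hu₀

theorem artanh_div_self_lt_artanh_div_self {u v : ℝ} (hv₀ : v ≠ 0) (hvu : |v| < |u|)
    (hu : |u| < 1) : artanh v / v < artanh u / u := by
  have hu₀ : u ≠ 0 := abs_pos.1 ((abs_nonneg v).trans_lt hvu)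
  have hsq : v ^ 2 < u ^ 2 := sq_lt_sq.2 hvu
  refine hasSum_lt (i := 1) (fun k => ?_) ?_ (hasSum_artanh_div_self hv₀ (hvu.trans hu))
    (hasSum_artanh_div_self hu₀ hu)
  · simp only [pow_mul]
    gcongr
  · norm_num
    linarith

theorem abs_sub_div_add_lt_one {x y : ℝ} (hx : 0 < x) (hy : 0 < y) : |(x - y) / (x + y)| < 1 := by
  rw [abs_div, abs_of_pos (add_pos hx hy), div_lt_one (add_pos hx hy), abs_sub_lt_iff]
  constructor <;> linarith

theorem log_sub_log_eq_two_mul_artanh {x y : ℝ} (hx : 0 < x) (hy : 0 < y) :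
    log x - log y = 2 * artanh ((x - y) / (x + y)) := by
  obtain ⟨hu₁, hu₂⟩ := abs_le.1 (abs_sub_div_add_lt_one hx hy).le
  rw [artanh_eq_half_log ⟨hu₁, hu₂⟩, ← log_div hx.ne' hy.ne']
  field_simp
  ring_nf

end Real

theorem L_sq_sq (x y : ℝ) : L (x ^ 2) (y ^ 2) = A x y * L x y := by
  rw [L, L, A, log_pow, log_pow, ← mul_sub, sq_sub_sq, mul_div_mul_comm]
  push_cast
  ring

theorem L_eq_A_div {x y : ℝ} (hx : 0 < x) (hy : 0 < y) :
    L x y = A x y / (artanh ((x - y) / (x + y)) / ((x - y) / (x + y))) := by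
  rw [L, A, log_sub_log_eq_two_mul_artanh hx hy, div_div_eq_mul_div]
  field_simp

theorem L_sq_sq_eq_A_sq_div {x y : ℝ} (hx : 0 < x) (hy : 0 < y) :
    L (x ^ 2) (y ^ 2) = A x y ^ 2 / (artanh ((x - y) / (x + y)) / ((x - y) / (x + y))) := by
  rw [L_sq_sq, L_eq_A_div hx hy, mul_div_assoc', sq]

theorem G_sq_sq {x y : ℝ} (hx : 0 ≤ x) (hy : 0 ≤ y) : G (x ^ 2) (y ^ 2) = x * y := by
  rw [G, ← mul_pow, sqrt_sq (mul_nonneg hx hy)]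

theorem A_A_G_sq_sq {x y : ℝ} (hx : 0 ≤ x) (hy : 0 ≤ y) :
    A (A (x ^ 2) (y ^ 2)) (G (x ^ 2) (y ^ 2)) = A x y ^ 2 := by
  rw [G_sq_sq hx hy, A, A, A]
  ring

theorem L_A_G_sq_sq_eq_A_sq_div {x y : ℝ} (hx : 0 < x) (hy : 0 < y) :
    L (A (x ^ 2) (y ^ 2)) (G (x ^ 2) (y ^ 2)) =
      A x y ^ 2 / (artanh (((x - y) / (x + y)) ^ 2) / ((x - y) / (x + y)) ^ 2) := by
  have hA : 0 < A (x ^ 2) (y ^ 2) := by unfold A; positivity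
  have hG : 0 < G (x ^ 2) (y ^ 2) := by rw [G_sq_sq hx.le hy.le]; positivity
  have hu : (A (x ^ 2) (y ^ 2) - G (x ^ 2) (y ^ 2)) / (A (x ^ 2) (y ^ 2) + G (x ^ 2) (y ^ 2)) =
      ((x - y) / (x + y)) ^ 2 := by
    rw [G_sq_sq hx.le hy.le, A, div_pow, div_eq_div_iff (by positivity) (by positivity)]
    ring
  rw [L_eq_A_div hA hG, A_A_G_sq_sq hx.le hy.le, hu]

theorem stmt_5 (a b : ℝ) (ha : 0 < a) (hb : 0 < b) (hab : a ≠ b) :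
    L (A a b ^ 2) (G a b ^ 2) = ((A a b + G a b) / 2) * L (A a b) (G a b) ∧
    ((A a b + G a b) / 2) * L (A a b) (G a b) > ((A a b + G a b) / 2) * L a b ∧
    ((A a b + G a b) / 2) * L a b > L a b ^ 2 := by
  obtain ⟨x, hx, rfl⟩ : ∃ x, 0 < x ∧ x ^ 2 = a := ⟨√a, sqrt_pos.2 ha, sq_sqrt ha.le⟩
  obtain ⟨y, hy, rfl⟩ : ∃ y, 0 < y ∧ y ^ 2 = b := ⟨√b, sqrt_pos.2 hb, sq_sqrt hb.le⟩
  set u := (x - y) / (x + y)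
  have hu₀ : u ≠ 0 := div_ne_zero (sub_ne_zero.2 (by rintro rfl; exact hab rfl)) (by positivity)
  have hu : |u| < 1 := abs_sub_div_add_lt_one hx hy
  have hu₀' : u ^ 2 ≠ 0 := pow_ne_zero 2 hu₀
  have hu' : |u ^ 2| < |u| := by
    rw [abs_pow]
    exact pow_lt_self_of_lt_one₀ (abs_pos.2 hu₀) hu one_lt_two
  have hAG : (A (x ^ 2) (y ^ 2) + G (x ^ 2) (y ^ 2)) / 2 = A x y ^ 2 := A_A_G_sq_sq hx.le hy.le
  have hA : 0 < A x y ^ 2 := by unfold A; positivity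
  refine ⟨L_sq_sq _ _, ?_, ?_⟩
  · rw [hAG, L_sq_sq_eq_A_sq_div hx hy, L_A_G_sq_sq_eq_A_sq_div hx hy]
    refine mul_lt_mul_of_pos_left (div_lt_div_of_pos_left hA ?_ ?_) hA
    · exact one_pos.trans (one_lt_artanh_div_self hu₀' (hu'.trans hu))
    · exact artanh_div_self_lt_artanh_div_self hu₀' hu' hu
  · have hφ := one_lt_artanh_div_self hu₀ hu
    rw [hAG, L_sq_sq_eq_A_sq_div hx hy, sq (A x y ^ 2 / _)]
    exact mul_lt_mul_of_pos_right (div_lt_self hA hφ) (div_pos hA (one_pos.trans hφ))
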